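/- arXiv:2410.01252 — 3 statements merged into one kernel-verified Lean document; each statement's English description precedes it below -/
import Mathlib

section
/- Let G be a finite group acting on a finite set Q, H ≤ G, and q ∈ Q. If |G·q| / |H·q| = |G| / |H| (i.e., q is well-behaved for H), then the orbit G·q is the disjoint union of the sets Cᵢ(q) = {g(q) | g ∈ Cᵢ} over the left cosets Cᵢ of H, and these sets are pairwise disjoint, each of cardinality |H·q|. -/
/-!
Orbit–stabilizer turns the well-behavedness condition into `[G : G_q] / [H : H ∩ G_q] = [G : H]`.
Comparing the two ways of computing `[G : G_q ∩ H]` then forces `G_q ≤ H`. The set `Cᵢ(q)` is a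
translate `g₀ • (H·q)` of the `H`-orbit, so all have size `|H·q|`; and if `g₀h₀·q = g₁h₁·q`, the
element `(g₀h₀)⁻¹g₁h₁` fixes `q`, hence lies in `H`, so `g₀H = g₁H`.
-/

open Pointwise MulAction

theorem Subgroup.le_of_index_div_relIndex_eq_index {G : Type*} [Group G] {K H : Subgroup G}
    [K.FiniteIndex] [H.FiniteIndex] (h : K.index / K.relIndex H = H.index) : K ≤ H := by
  have hcross : H.relIndex K * K.index = K.relIndex H * H.index := by
    rw [← inf_relIndex_left, relIndex_mul_index inf_le_left, ← inf_relIndex_right,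
      relIndex_mul_index inf_le_right, inf_comm]
  have hle : K.relIndex H * H.index ≤ K.index := h ▸ Nat.mul_div_le K.index (K.relIndex H)
  have hK : 0 < K.index := Nat.pos_of_ne_zero FiniteIndex.index_ne_zero
  have hHK : H.relIndex K ≠ 0 := (isFiniteRelIndex_of_finiteIndex (K := K)).relIndex_ne_zero
  rw [← relIndex_eq_one]
  nlinarith [Nat.pos_of_ne_zero hHK]

namespace MulAction

variable {G Q : Type*} [Group G] [MulAction G Q]

theorem card_orbit_eq_index_stabilizer (q : Q) :
    Nat.card (orbit G q) = (stabilizer G q).index := by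
  rw [Nat.card_coe_set_eq, index_stabilizer]

theorem card_orbit_subgroup_eq_relIndex_stabilizer (H : Subgroup G) (q : Q) :
    Nat.card (orbit H q) = (stabilizer G q).relIndex H :=
  card_orbit_eq_index_stabilizer q

theorem stabilizer_le_of_card_orbit_div_eq [Finite G] (H : Subgroup G) (q : Q)
    (h : Nat.card (orbit G q) / Nat.card (orbit H q) = Nat.card G / Nat.card H) :
    stabilizer G q ≤ H := by
  have hindex : Nat.card G / Nat.card H = H.index :=
    Nat.div_eq_of_eq_mul_right Nat.card_pos H.card_mul_index.symm
  rw [card_orbit_eq_index_stabilizer, card_orbit_subgroup_eq_relIndex_stabilizer, hindex] at h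
  exact Subgroup.le_of_index_div_relIndex_eq_index h

theorem image_smul_leftCoset (H : Subgroup G) (q : Q) (g₀ : G) :
    (fun g => g • q) '' (g₀ • (H : Set G)) = g₀ • orbit H q := by
  ext x
  simp only [Set.mem_image, Set.mem_smul_set, mem_orbit_iff, Subgroup.smul_def]
  constructor
  · rintro ⟨_, ⟨h, hh, rfl⟩, rfl⟩
    exact ⟨h • q, ⟨⟨h, hh⟩, rfl⟩, (mul_smul g₀ h q).symm⟩
  · rintro ⟨_, ⟨h, rfl⟩, rfl⟩
    exact ⟨g₀ * h, ⟨h, h.2, rfl⟩, mul_smul g₀ (h : G) q⟩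

theorem card_image_smul_leftCoset (H : Subgroup G) (q : Q) (g₀ : G) :
    Nat.card ((fun g => g • q) '' (g₀ • (H : Set G))) = Nat.card (orbit H q) := by
  rw [image_smul_leftCoset]
  exact Nat.card_image_of_injective (MulAction.injective g₀) _

theorem iUnion_image_smul_leftCoset (H : Subgroup G) (q : Q) :
    ⋃ g₀ : G, (fun g => g • q) '' (g₀ • (H : Set G)) = orbit G q := by
  refine Set.Subset.antisymm (Set.iUnion_subset fun g₀ => ?_) fun x ⟨g, hg⟩ => ?_
  · rintro _ ⟨g, -, rfl⟩
    exact mem_orbit q g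
  · exact Set.mem_iUnion.2 ⟨g, g, ⟨1, H.one_mem, mul_one g⟩, hg⟩

theorem disjoint_image_smul_leftCoset {H : Subgroup G} {q : Q} (hq : stabilizer G q ≤ H)
    {g₀ g₁ : G} (hne : g₀ • (H : Set G) ≠ g₁ • (H : Set G)) :
    Disjoint ((fun g => g • q) '' (g₀ • (H : Set G)))
      ((fun g => g • q) '' (g₁ • (H : Set G))) := by
  rw [Set.disjoint_left]
  rintro _ ⟨_, ⟨h₀, hh₀, rfl⟩, rfl⟩ ⟨_, ⟨h₁, hh₁, rfl⟩, heq⟩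
  apply hne
  have hfix : (g₀ * h₀)⁻¹ * (g₁ * h₁) ∈ H := hq <| by
    rw [mem_stabilizer_iff, mul_smul]
    exact inv_smul_eq_iff.2 heq
  have hcoset : g₀⁻¹ * g₁ = h₀ * ((g₀ * h₀)⁻¹ * (g₁ * h₁)) * h₁⁻¹ := by group
  rw [leftCoset_eq_iff, hcoset]
  exact H.mul_mem (H.mul_mem hh₀ hfix) (H.inv_mem hh₁)

end MulAction

theorem wellBehaved_orbit_decomposition_general (G Q : Type*) [Group G] [Finite G] [MulAction G Q]
    (H : Subgroup G) (q : Q)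
    (hwb : Nat.card (orbit G q) / Nat.card (orbit H q) = Nat.card G / Nat.card H) :
    (⋃ g₀ : G, (fun g => g • q) '' (g₀ • (H : Set G))) = orbit G q ∧
    (∀ g₀ g₁ : G, g₀ • (H : Set G) ≠ g₁ • (H : Set G) →
      Disjoint ((fun g => g • q) '' (g₀ • (H : Set G)))
        ((fun g => g • q) '' (g₁ • (H : Set G)))) ∧
    (∀ g₀ : G, Nat.card ((fun g => g • q) '' (g₀ • (H : Set G))) =
      Nat.card (orbit H q)) :=
  ⟨iUnion_image_smul_leftCoset H q,
    fun _ _ => disjoint_image_smul_leftCoset (stabilizer_le_of_card_orbit_div_eq H q hwb),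
    card_image_smul_leftCoset H q⟩

/-- Let a finite group `G` act on a finite set `Q`, `H ≤ G`, and `q ∈ Q`.  If `q` is
well-behaved for `H`, i.e. `|G·q| / |H·q| = |G| / |H|`, then the orbit `G·q` is the disjoint
union of the sets `Cᵢ(q) = {g • q | g ∈ Cᵢ}` over the left cosets `Cᵢ` of `H`: these sets
cover the orbit, sets from distinct cosets are disjoint, and each has cardinality `|H·q|`. -/
theorem wellBehaved_orbit_decomposition (G Q : Type*) [Group G] [Finite G] [MulAction G Q]
    [Finite Q] (H : Subgroup G) (q : Q)
    (hwb : Nat.card (orbit G q) / Nat.card (orbit H q) = Nat.card G / Nat.card H) :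
    (⋃ g₀ : G, (fun g => g • q) '' (g₀ • (H : Set G))) = orbit G q ∧
    (∀ g₀ g₁ : G, g₀ • (H : Set G) ≠ g₁ • (H : Set G) →
      Disjoint ((fun g => g • q) '' (g₀ • (H : Set G)))
        ((fun g => g • q) '' (g₁ • (H : Set G)))) ∧
    (∀ g₀ : G, Nat.card ((fun g => g • q) '' (g₀ • (H : Set G))) =
      Nat.card (orbit H q)) :=
  wellBehaved_orbit_decomposition_general G Q H q hwb
end

section
/- Let H₁ ≤ H₂ ≤ G be subgroups of a finite group G acting on a set Q, and q ∈ Q. If |G·q|/|H₁·q| = |G|/|H₁|, then |G·q|/|H₂·q| = |G|/|H₂|. -/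
open MulAction

private lemma orbit_stab_mul (G Q : Type*) [Group G] [Finite G] [MulAction G Q] (q : Q) :
    Nat.card (orbit G q) * Nat.card (stabilizer G q) = Nat.card G := by
  rw [← (stabilizer G q).index_mul_card, MulAction.index_stabilizer,
    Nat.card_coe_set_eq]

private lemma stab_subgroup (G Q : Type*) [Group G] [MulAction G Q] (H : Subgroup G) (q : Q) :
    stabilizer H q = (stabilizer G q).subgroupOf H := by
  ext x
  simp [Subgroup.mem_subgroupOf, MulAction.mem_stabilizer_iff, Subgroup.smul_def]

/-- Let `H₁ ≤ H₂ ≤ G` be subgroups of a finite group `G` acting on a set `Q`, and `q ∈ Q`.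
If `|G·q|/|H₁·q| = |G|/|H₁|` (well-behavedness for `H₁`), then `|G·q|/|H₂·q| = |G|/|H₂|`. -/
theorem wellBehaved_mono (G Q : Type*) [Group G] [Finite G] [MulAction G Q]
    (H₁ H₂ : Subgroup G) (hle : H₁ ≤ H₂) (q : Q)
    (h1 : Nat.card (orbit G q) / Nat.card (orbit H₁ q) = Nat.card G / Nat.card H₁) :
    Nat.card (orbit G q) / Nat.card (orbit H₂ q) = Nat.card G / Nat.card H₂ := by
  set S := stabilizer G q with hS
  -- basic cardinalities
  have hG : Nat.card (orbit G q) * Nat.card S = Nat.card G := orbit_stab_mul G Q q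
  have hH1 : Nat.card (orbit H₁ q) * Nat.card (stabilizer H₁ q) = Nat.card H₁ :=
    orbit_stab_mul H₁ Q q
  have hH2 : Nat.card (orbit H₂ q) * Nat.card (stabilizer H₂ q) = Nat.card H₂ :=
    orbit_stab_mul H₂ Q q
  -- injection from stabilizer in H₁ into S
  let φ : stabilizer H₁ q → S := fun x => ⟨x.1.1, by
    have hx : (x : ↥H₁) ∈ (stabilizer G q).subgroupOf H₁ := by
      rw [← stab_subgroup G Q H₁ q]; exact x.2
    exact hx⟩
  have hφinj : Function.Injective φ := by
    intro x y hxy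
    have h3 := congrArg (fun z : S => (z : G)) hxy
    exact Subtype.ext (Subtype.ext h3)
  have hle1 : Nat.card (stabilizer H₁ q) ≤ Nat.card S :=
    Nat.card_le_card_of_injective φ hφinj
  -- positivity
  haveI : Finite (orbit G q) := (Set.finite_range (fun g : G => g • q)).to_subtype
  haveI : Finite (orbit H₁ q) := (Set.finite_range (fun g : H₁ => g • q)).to_subtype
  haveI : Finite (orbit H₂ q) := (Set.finite_range (fun g : H₂ => g • q)).to_subtype
  haveI : Nonempty (orbit G q) := ⟨⟨q, mem_orbit_self q⟩⟩
  haveI : Nonempty (orbit H₁ q) := ⟨⟨q, mem_orbit_self q⟩⟩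
  haveI : Nonempty (orbit H₂ q) := ⟨⟨q, mem_orbit_self q⟩⟩
  have haq : 0 < Nat.card (orbit G q) := Nat.card_pos
  have hb1 : 0 < Nat.card (orbit H₁ q) := Nat.card_pos
  have hs1 : 0 < Nat.card (stabilizer H₁ q) := Nat.card_pos
  have hn1 : 0 < Nat.card H₁ := Nat.card_pos
  -- card H₁ divides card G
  obtain ⟨m, hm⟩ := (Subgroup.card_subgroup_dvd_card H₁)
  have hmval : Nat.card G / Nat.card H₁ = m := by
    rw [hm, Nat.mul_div_cancel_left _ hn1]
  -- from h1: m * |orbit H₁ q| ≤ |orbit G q|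
  have hkey : m * Nat.card (orbit H₁ q) ≤ Nat.card (orbit G q) := by
    rw [← hmval, ← h1]
    exact Nat.div_mul_le_self _ _
  -- deduce |S| ≤ |stab H₁|
  have hSle : Nat.card S ≤ Nat.card (stabilizer H₁ q) := by
    have h2 : Nat.card (orbit G q) * Nat.card S
        ≤ Nat.card (orbit G q) * Nat.card (stabilizer H₁ q) := by
      calc Nat.card (orbit G q) * Nat.card S = Nat.card G := hG
        _ = m * Nat.card H₁ := by rw [hm, mul_comm]
        _ = m * (Nat.card (orbit H₁ q) * Nat.card (stabilizer H₁ q)) := by rw [hH1]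
        _ = (m * Nat.card (orbit H₁ q)) * Nat.card (stabilizer H₁ q) := by ring
        _ ≤ Nat.card (orbit G q) * Nat.card (stabilizer H₁ q) :=
            Nat.mul_le_mul_right _ hkey
    exact Nat.le_of_mul_le_mul_left h2 haq
  have hcardeq : Nat.card (stabilizer H₁ q) = Nat.card S := le_antisymm hle1 hSle
  -- φ is bijective, so S ≤ H₁
  have hφbij : Function.Bijective φ :=
    (Nat.bijective_iff_injective_and_card φ).mpr ⟨hφinj, hcardeq⟩
  have hSH1 : S ≤ H₁ := by
    intro s hs
    obtain ⟨x, hx⟩ := hφbij.2 ⟨s, hs⟩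
    have : (x.1 : G) = s := congrArg Subtype.val hx
    rw [← this]
    exact x.1.2
  have hSH2 : S ≤ H₂ := hSH1.trans hle
  -- stabilizer in H₂ has same card as S
  have hs2eq : Nat.card (stabilizer H₂ q) = Nat.card S := by
    rw [stab_subgroup G Q H₂ q]
    exact Nat.card_congr (Subgroup.subgroupOfEquivOfLe hSH2).toEquiv
  -- conclude
  have hsG : 0 < Nat.card S := Nat.card_pos
  rw [← hG, ← hH2, hs2eq, Nat.mul_div_mul_right _ _ hsG]
end

section
/- For a single-qubit operator O = aX + bY + cZ (a, b, c ∈ ℝ) and rotation R(α, β) = e^{-iαX} e^{-iβZ}, the averaged conjugation vanishes: ∫₀^π ∫₀^π R(α,β)† O R(α,β) dα dβ = 0. -/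
open Matrix

/-- Pauli `X` matrix. -/
def pauliX : Matrix (Fin 2) (Fin 2) ℂ := !![0, 1; 1, 0]

/-- Pauli `Y` matrix. -/
def pauliY : Matrix (Fin 2) (Fin 2) ℂ := !![0, -Complex.I; Complex.I, 0]

/-- Pauli `Z` matrix. -/
def pauliZ : Matrix (Fin 2) (Fin 2) ℂ := !![1, 0; 0, -1]

/-- The single-qubit rotation `R(α, β) = e^{-iαX} e^{-iβZ}`, where
`e^{-iαX} = cos(α) I − i sin(α) X` and similarly for `Z`. -/
noncomputable def rot (α β : ℝ) : Matrix (Fin 2) (Fin 2) ℂ :=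
  ((Real.cos α : ℂ) • (1 : Matrix (Fin 2) (Fin 2) ℂ) -
      (Complex.I * Real.sin α) • pauliX) *
    ((Real.cos β : ℂ) • (1 : Matrix (Fin 2) (Fin 2) ℂ) -
      (Complex.I * Real.sin β) • pauliZ)

lemma intCos2 : (∫ x in (0:ℝ)..Real.pi, ((Real.cos x : ℂ))^2) = ((Real.pi/2 : ℝ) : ℂ) := by
  simp only [← Complex.ofReal_pow]
  rw [intervalIntegral.integral_ofReal]
  norm_num [integral_cos_sq]

lemma intSin2 : (∫ x in (0:ℝ)..Real.pi, ((Real.sin x : ℂ))^2) = ((Real.pi/2 : ℝ) : ℂ) := by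
  simp only [← Complex.ofReal_pow]
  rw [intervalIntegral.integral_ofReal]
  norm_num [integral_sin_sq]

lemma intSinCos : (∫ x in (0:ℝ)..Real.pi, ((Real.sin x : ℂ) * (Real.cos x : ℂ))) = 0 := by
  simp only [← Complex.ofReal_mul]
  rw [intervalIntegral.integral_ofReal]
  norm_num [integral_sin_mul_cos₁]

lemma I3 : Complex.I ^ 3 = -Complex.I := by
  rw [pow_succ, Complex.I_sq]; ring

lemma I5 : Complex.I ^ 5 = Complex.I := by
  rw [show (5:ℕ) = 3+2 from rfl, pow_add, I3, Complex.I_sq]; ring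

lemma quadInt (A B C : ℂ) :
    (∫ x in (0:ℝ)..Real.pi,
      (A * (Real.cos x : ℂ)^2 + B * ((Real.sin x : ℂ) * (Real.cos x : ℂ)) +
        C * (Real.sin x : ℂ)^2)) = ((Real.pi/2 : ℝ) : ℂ) * (A + C) := by
  have h1 : IntervalIntegrable (fun x : ℝ => A * (Real.cos x : ℂ)^2)
      MeasureTheory.volume 0 Real.pi := by
    apply Continuous.intervalIntegrable; fun_prop
  have h2 : IntervalIntegrable (fun x : ℝ => B * ((Real.sin x : ℂ) * (Real.cos x : ℂ)))
      MeasureTheory.volume 0 Real.pi := by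
    apply Continuous.intervalIntegrable; fun_prop
  have h3 : IntervalIntegrable (fun x : ℝ => C * (Real.sin x : ℂ)^2)
      MeasureTheory.volume 0 Real.pi := by
    apply Continuous.intervalIntegrable; fun_prop
  rw [intervalIntegral.integral_add (h1.add h2) h3, intervalIntegral.integral_add h1 h2,
    intervalIntegral.integral_const_mul, intervalIntegral.integral_const_mul,
    intervalIntegral.integral_const_mul, intCos2, intSin2, intSinCos]
  ring

/-- For a single-qubit operator `O = aX + bY + cZ` (`a, b, c ∈ ℝ`), the averaged
conjugation vanishes entrywise: `∫₀^π ∫₀^π R(α,β)† O R(α,β) dα dβ = 0`. -/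
theorem averaged_conjugation_vanishes (a b c : ℝ) (p q : Fin 2) :
    (∫ α in (0:ℝ)..Real.pi, ∫ β in (0:ℝ)..Real.pi,
      ((rot α β)ᴴ * ((a : ℂ) • pauliX + (b : ℂ) • pauliY + (c : ℂ) • pauliZ) *
        rot α β) p q) = 0 := by
  fin_cases p <;> fin_cases q
  · -- (0,0)
    show (∫ α in (0:ℝ)..Real.pi, ∫ β in (0:ℝ)..Real.pi,
      ((rot α β)ᴴ * ((a : ℂ) • pauliX + (b : ℂ) • pauliY + (c : ℂ) • pauliZ) *
        rot α β) 0 0) = 0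
    have key : ∀ α : ℝ, (∫ β in (0:ℝ)..Real.pi,
        ((rot α β)ᴴ * ((a : ℂ) • pauliX + (b : ℂ) • pauliY + (c : ℂ) • pauliZ) *
          rot α β) 0 0) =
        ((Real.pi : ℂ) * c) * (Real.cos α : ℂ)^2 +
          (-(2 * (Real.pi : ℂ) * b)) * ((Real.sin α : ℂ) * (Real.cos α : ℂ)) +
          (-((Real.pi : ℂ) * c)) * (Real.sin α : ℂ)^2 := by
      intro α
      have h : Set.EqOn
          (fun β : ℝ => ((rot α β)ᴴ *
            ((a : ℂ) • pauliX + (b : ℂ) • pauliY + (c : ℂ) • pauliZ) * rot α β) 0 0)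
          (fun β : ℝ =>
            ((c:ℂ) * (Real.cos α:ℂ)^2 - 2*b*(Real.cos α:ℂ)*(Real.sin α:ℂ) - c*(Real.sin α:ℂ)^2)
              * (Real.cos β : ℂ)^2 +
            (0:ℂ) * ((Real.sin β : ℂ) * (Real.cos β : ℂ)) +
            ((c:ℂ) * (Real.cos α:ℂ)^2 - 2*b*(Real.cos α:ℂ)*(Real.sin α:ℂ) - c*(Real.sin α:ℂ)^2)
              * (Real.sin β : ℂ)^2)
          (Set.uIcc 0 Real.pi) := by
        intro β _
        simp only [rot, pauliX, pauliY, pauliZ]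
        generalize Real.cos α = x
        generalize Real.sin α = y
        generalize Real.cos β = u
        generalize Real.sin β = v
        simp [Matrix.mul_apply, Fin.sum_univ_two, Matrix.conjTranspose_apply]
        ring_nf
        all_goals simp only [Complex.I_sq, Complex.I_pow_four, I3, I5]
        all_goals ring
      rw [intervalIntegral.integral_congr h, quadInt]
      push_cast
      ring
    rw [intervalIntegral.integral_congr (fun α _ => key α), quadInt]
    ring
  · -- (0,1)
    show (∫ α in (0:ℝ)..Real.pi, ∫ β in (0:ℝ)..Real.pi,
      ((rot α β)ᴴ * ((a : ℂ) • pauliX + (b : ℂ) • pauliY + (c : ℂ) • pauliZ) *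
        rot α β) 0 1) = 0
    have key : ∀ α : ℝ, (∫ β in (0:ℝ)..Real.pi,
        ((rot α β)ᴴ * ((a : ℂ) • pauliX + (b : ℂ) • pauliY + (c : ℂ) • pauliZ) *
          rot α β) 0 1) = 0 := by
      intro α
      have h : Set.EqOn
          (fun β : ℝ => ((rot α β)ᴴ *
            ((a : ℂ) • pauliX + (b : ℂ) • pauliY + (c : ℂ) • pauliZ) * rot α β) 0 1)
          (fun β : ℝ =>
            ((a:ℂ)*(Real.cos α:ℂ)^2 + a*(Real.sin α:ℂ)^2 - b*Complex.I*(Real.cos α:ℂ)^2 +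
              b*Complex.I*(Real.sin α:ℂ)^2 - 2*c*Complex.I*(Real.cos α:ℂ)*(Real.sin α:ℂ))
              * (Real.cos β : ℂ)^2 +
            (2*(b:ℂ)*(Real.cos α:ℂ)^2 - 2*b*(Real.sin α:ℂ)^2 + 2*a*Complex.I*(Real.sin α:ℂ)^2 +
              2*a*Complex.I*(Real.cos α:ℂ)^2 + 4*c*(Real.cos α:ℂ)*(Real.sin α:ℂ))
              * ((Real.sin β : ℂ) * (Real.cos β : ℂ)) +
            (-((a:ℂ)*(Real.cos α:ℂ)^2 + a*(Real.sin α:ℂ)^2 - b*Complex.I*(Real.cos α:ℂ)^2 +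
              b*Complex.I*(Real.sin α:ℂ)^2 - 2*c*Complex.I*(Real.cos α:ℂ)*(Real.sin α:ℂ)))
              * (Real.sin β : ℂ)^2)
          (Set.uIcc 0 Real.pi) := by
        intro β _
        simp only [rot, pauliX, pauliY, pauliZ]
        generalize Real.cos α = x
        generalize Real.sin α = y
        generalize Real.cos β = u
        generalize Real.sin β = v
        simp [Matrix.mul_apply, Fin.sum_univ_two, Matrix.conjTranspose_apply]
        ring_nf
        all_goals simp only [Complex.I_sq, Complex.I_pow_four, I3, I5]
        all_goals ring
      rw [intervalIntegral.integral_congr h, quadInt]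
      ring
    rw [intervalIntegral.integral_congr (fun α _ => key α), intervalIntegral.integral_zero]
  · -- (1,0)
    show (∫ α in (0:ℝ)..Real.pi, ∫ β in (0:ℝ)..Real.pi,
      ((rot α β)ᴴ * ((a : ℂ) • pauliX + (b : ℂ) • pauliY + (c : ℂ) • pauliZ) *
        rot α β) 1 0) = 0
    have key : ∀ α : ℝ, (∫ β in (0:ℝ)..Real.pi,
        ((rot α β)ᴴ * ((a : ℂ) • pauliX + (b : ℂ) • pauliY + (c : ℂ) • pauliZ) *
          rot α β) 1 0) = 0 := by
      intro α
      have h : Set.EqOn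
          (fun β : ℝ => ((rot α β)ᴴ *
            ((a : ℂ) • pauliX + (b : ℂ) • pauliY + (c : ℂ) • pauliZ) * rot α β) 1 0)
          (fun β : ℝ =>
            ((a:ℂ)*(Real.cos α:ℂ)^2 + a*(Real.sin α:ℂ)^2 + b*Complex.I*(Real.cos α:ℂ)^2 -
              b*Complex.I*(Real.sin α:ℂ)^2 + 2*c*Complex.I*(Real.cos α:ℂ)*(Real.sin α:ℂ))
              * (Real.cos β : ℂ)^2 +
            (2*(b:ℂ)*(Real.cos α:ℂ)^2 - 2*b*(Real.sin α:ℂ)^2 - 2*a*Complex.I*(Real.sin α:ℂ)^2 -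
              2*a*Complex.I*(Real.cos α:ℂ)^2 + 4*c*(Real.cos α:ℂ)*(Real.sin α:ℂ))
              * ((Real.sin β : ℂ) * (Real.cos β : ℂ)) +
            (-((a:ℂ)*(Real.cos α:ℂ)^2 + a*(Real.sin α:ℂ)^2 + b*Complex.I*(Real.cos α:ℂ)^2 -
              b*Complex.I*(Real.sin α:ℂ)^2 + 2*c*Complex.I*(Real.cos α:ℂ)*(Real.sin α:ℂ)))
              * (Real.sin β : ℂ)^2)
          (Set.uIcc 0 Real.pi) := by
        intro β _
        simp only [rot, pauliX, pauliY, pauliZ]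
        generalize Real.cos α = x
        generalize Real.sin α = y
        generalize Real.cos β = u
        generalize Real.sin β = v
        simp [Matrix.mul_apply, Fin.sum_univ_two, Matrix.conjTranspose_apply]
        ring_nf
        all_goals simp only [Complex.I_sq, Complex.I_pow_four, I3, I5]
        all_goals ring
      rw [intervalIntegral.integral_congr h, quadInt]
      ring
    rw [intervalIntegral.integral_congr (fun α _ => key α), intervalIntegral.integral_zero]
  · -- (1,1)
    show (∫ α in (0:ℝ)..Real.pi, ∫ β in (0:ℝ)..Real.pi,
      ((rot α β)ᴴ * ((a : ℂ) • pauliX + (b : ℂ) • pauliY + (c : ℂ) • pauliZ) *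
        rot α β) 1 1) = 0
    have key : ∀ α : ℝ, (∫ β in (0:ℝ)..Real.pi,
        ((rot α β)ᴴ * ((a : ℂ) • pauliX + (b : ℂ) • pauliY + (c : ℂ) • pauliZ) *
          rot α β) 1 1) =
        (-((Real.pi : ℂ) * c)) * (Real.cos α : ℂ)^2 +
          (2 * (Real.pi : ℂ) * b) * ((Real.sin α : ℂ) * (Real.cos α : ℂ)) +
          ((Real.pi : ℂ) * c) * (Real.sin α : ℂ)^2 := by
      intro α
      have h : Set.EqOn
          (fun β : ℝ => ((rot α β)ᴴ *
            ((a : ℂ) • pauliX + (b : ℂ) • pauliY + (c : ℂ) • pauliZ) * rot α β) 1 1)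
          (fun β : ℝ =>
            (-(c:ℂ) * (Real.cos α:ℂ)^2 + 2*b*(Real.cos α:ℂ)*(Real.sin α:ℂ) + c*(Real.sin α:ℂ)^2)
              * (Real.cos β : ℂ)^2 +
            (0:ℂ) * ((Real.sin β : ℂ) * (Real.cos β : ℂ)) +
            (-(c:ℂ) * (Real.cos α:ℂ)^2 + 2*b*(Real.cos α:ℂ)*(Real.sin α:ℂ) + c*(Real.sin α:ℂ)^2)
              * (Real.sin β : ℂ)^2)
          (Set.uIcc 0 Real.pi) := by
        intro β _
        simp only [rot, pauliX, pauliY, pauliZ]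
        generalize Real.cos α = x
        generalize Real.sin α = y
        generalize Real.cos β = u
        generalize Real.sin β = v
        simp [Matrix.mul_apply, Fin.sum_univ_two, Matrix.conjTranspose_apply]
        ring_nf
        all_goals simp only [Complex.I_sq, Complex.I_pow_four, I3, I5]
        all_goals ring
      rw [intervalIntegral.integral_congr h, quadInt]
      push_cast
      ring
    rw [intervalIntegral.integral_congr (fun α _ => key α), quadInt]
    ring
end
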